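/- Let δ ≥ 0 and let X be a geodesic metric space satisfying the 4δ-inequality. Let γ, σ : [0,∞) → X be geodesic rays with (γ(n)|σ(n))_{γ(0)} → ∞ as n → ∞ (i.e. γ and σ converge to the same Gromov boundary point), and let b_γ and b_σ denote their Busemann functions. Then there is a constant c ∈ ℝ such that |b_γ(x) − b_σ(x) − c| ≤ 72δ for all x ∈ X; moreover if γ(0) = σ(0) then this holds with c = 0. -/
import Mathlib


open Filter MeasureTheory Set

/-- `g` restricted to `s ⊆ ℝ` is an isometric (geodesic) parametrization. -/
def IsGeodesicOn {X : Type*} [MetricSpace X] (g : ℝ → X) (s : Set ℝ) : Prop :=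
  ∀ u ∈ s, ∀ v ∈ s, dist (g u) (g v) = |u - v|

/-- A geodesic from `x` to `y`, parametrized by arclength on `[0, dist x y]`. -/
def GeodesicFromTo {X : Type*} [MetricSpace X] (g : ℝ → X) (x y : X) : Prop :=
  IsGeodesicOn g (Set.Icc 0 (dist x y)) ∧ g 0 = x ∧ g (dist x y) = y

/-- `X` is a geodesic metric space: every pair of points is joined by a geodesic. -/
def GeodesicSpace (X : Type*) [MetricSpace X] : Prop :=
  ∀ x y : X, ∃ g : ℝ → X, GeodesicFromTo g x y

/-- The Gromov product `(x|y)_p` of `x` and `y` with basepoint `p`. -/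
noncomputable def gromov {X : Type*} [MetricSpace X] (p x y : X) : ℝ :=
  (dist x p + dist y p - dist x y) / 2

/-- The `4δ`-inequality for Gromov products. -/
def FourDeltaIneq (X : Type*) [MetricSpace X] (δ : ℝ) : Prop :=
  ∀ x y z p : X, gromov p x z ≥ min (gromov p x y) (gromov p y z) - 4 * δ

lemma aux_lim {f g m : ℕ → ℝ} {A B d : ℝ}
    (hA : Tendsto f atTop (nhds A)) (hB : Tendsto g atTop (nhds B))
    (hm : Tendsto m atTop atTop)
    (hineq : ∀ n, min (m n) (f n) - d ≤ g n) : A - d ≤ B := by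
  have hev : ∀ᶠ n in atTop, f n - d ≤ g n := by
    filter_upwards [hm.eventually_ge_atTop (A + 1),
      hA.eventually (eventually_lt_nhds (lt_add_one A))] with n h1 h2
    have hmin : min (m n) (f n) = f n := min_eq_right (le_trans h2.le h1)
    have := hineq n
    rw [hmin] at this
    exact this
  exact le_of_tendsto_of_tendsto (hA.sub tendsto_const_nhds) hB hev

lemma gromov_comm {X : Type*} [MetricSpace X] (p x y : X) :
    gromov p x y = gromov p y x := by
  unfold gromov
  rw [dist_comm x y]
  ring

/-- Theorem: Busemann functions of asymptotic rays agree up to an additive constant,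
with error `72δ`; the constant vanishes when the rays share the same basepoint. -/
theorem statement8 {X : Type*} [MetricSpace X] (δ : ℝ) (hδ : 0 ≤ δ)
    (hgeo : GeodesicSpace X) (h4 : FourDeltaIneq X δ)
    (γ σ : ℝ → X)
    (hγ : IsGeodesicOn γ (Set.Ici 0)) (hσ : IsGeodesicOn σ (Set.Ici 0))
    (hconv : Tendsto (fun n : ℕ => gromov (γ 0) (γ (n : ℝ)) (σ (n : ℝ))) atTop atTop)
    (bγ bσ : X → ℝ)
    (hbγ : ∀ x : X, Tendsto (fun t : ℝ => dist (γ t) x - t) atTop (nhds (bγ x)))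
    (hbσ : ∀ x : X, Tendsto (fun t : ℝ => dist (σ t) x - t) atTop (nhds (bσ x))) :
    ∃ c : ℝ, (∀ x : X, |bγ x - bσ x - c| ≤ 72 * δ) ∧ (γ 0 = σ 0 → c = 0) := by
  set p := γ 0 with hp
  have hnat : Tendsto (fun n : ℕ => (n : ℝ)) atTop atTop :=
    tendsto_natCast_atTop_atTop
  have hγdist : ∀ n : ℕ, dist (γ (n : ℝ)) p = (n : ℝ) := by
    intro n
    have h := hγ (n : ℝ) (Set.mem_Ici.mpr (Nat.cast_nonneg n)) 0 (Set.mem_Ici.mpr le_rfl)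
    rw [h]
    simp [abs_of_nonneg (Nat.cast_nonneg n : (0:ℝ) ≤ n)]
  -- limits of Gromov products
  have hA : ∀ x : X, Tendsto (fun n : ℕ => gromov p (γ (n : ℝ)) x) atTop
      (nhds ((dist x p - bγ x) / 2)) := by
    intro x
    have h1 : Tendsto (fun n : ℕ => dist (γ (n : ℝ)) x - (n : ℝ)) atTop (nhds (bγ x)) :=
      (hbγ x).comp hnat
    have heq : (fun n : ℕ => gromov p (γ (n : ℝ)) x)
        = fun n : ℕ => (dist x p - (dist (γ (n : ℝ)) x - (n : ℝ))) / 2 := by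
      funext n
      unfold gromov
      rw [hγdist n]
      ring
    rw [heq]
    exact (tendsto_const_nhds.sub h1).div_const 2
  have hB : ∀ x : X, Tendsto (fun n : ℕ => gromov p (σ (n : ℝ)) x) atTop
      (nhds ((bσ p + dist x p - bσ x) / 2)) := by
    intro x
    have h1 : Tendsto (fun n : ℕ => dist (σ (n : ℝ)) p - (n : ℝ)) atTop (nhds (bσ p)) :=
      (hbσ p).comp hnat
    have h2 : Tendsto (fun n : ℕ => dist (σ (n : ℝ)) x - (n : ℝ)) atTop (nhds (bσ x)) :=
      (hbσ x).comp hnat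
    have heq : (fun n : ℕ => gromov p (σ (n : ℝ)) x)
        = fun n : ℕ => ((dist (σ (n : ℝ)) p - (n : ℝ)) + dist x p
            - (dist (σ (n : ℝ)) x - (n : ℝ))) / 2 := by
      funext n
      unfold gromov
      ring
    rw [heq]
    exact ((h1.add tendsto_const_nhds).sub h2).div_const 2
  refine ⟨-bσ p, ?_, ?_⟩
  · intro x
    set A : ℝ := (dist x p - bγ x) / 2 with hAdef
    set B : ℝ := (bσ p + dist x p - bσ x) / 2 with hBdef
    have h1 : B - 4 * δ ≤ A :=
      aux_lim (hB x) (hA x) hconv (fun n => h4 (γ (n : ℝ)) (σ (n : ℝ)) x p)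
    have h2 : A - 4 * δ ≤ B := by
      have hconv' : Tendsto (fun n : ℕ => gromov p (σ (n : ℝ)) (γ (n : ℝ))) atTop atTop := by
        have : (fun n : ℕ => gromov p (σ (n : ℝ)) (γ (n : ℝ)))
            = fun n : ℕ => gromov p (γ (n : ℝ)) (σ (n : ℝ)) := by
          funext n; exact gromov_comm p _ _
        rw [this]; exact hconv
      exact aux_lim (hA x) (hB x) hconv' (fun n => h4 (σ (n : ℝ)) (γ (n : ℝ)) x p)
    have hab : bγ x - bσ x - (-bσ p) = -(2 * A) + 2 * B := by
      rw [hAdef, hBdef]; ring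
    rw [hab, abs_le]
    constructor <;> linarith
  · intro h0
    have hσ0 : Tendsto (fun t : ℝ => dist (σ t) (σ 0) - t) atTop (nhds 0) := by
      have hev : ∀ᶠ t : ℝ in atTop, dist (σ t) (σ 0) - t = 0 := by
        filter_upwards [eventually_ge_atTop (0 : ℝ)] with t ht
        rw [hσ t (Set.mem_Ici.mpr ht) 0 (Set.mem_Ici.mpr le_rfl)]
        simp [abs_of_nonneg ht]
      exact Tendsto.congr' (by filter_upwards [hev] with t ht; rw [ht]) tendsto_const_nhds
    have := tendsto_nhds_unique (h0 ▸ hbσ p) hσ0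
    rw [h0, this, neg_zero]
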